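/- For the root system of type E7: for every nonempty subset J of {0,1,…,7} inducing a connected subgraph of the extended Dynkin diagram, the vector φ(J) is a positive root of E7; and the map φ, from the set of all such subsets J to the set of positive roots, is injective. -/

import Mathlib

/-- The Cartan matrix of type `E₇` in Bourbaki's numbering. -/
def E7Cartan : Matrix (Fin 7) (Fin 7) ℤ :=
  !![2,0,-1,0,0,0,0;
     0,2,0,-1,0,0,0;
     -1,0,2,-1,0,0,0;
     0,-1,-1,2,-1,0,0;
     0,0,0,-1,2,-1,0;
     0,0,0,0,-1,2,-1;
     0,0,0,0,0,-1,2]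

/-- The 63 positive roots of `E₇`: roots (coefficient vectors `v` with
`vᵀ C v = 2`) all of whose coordinates are nonnegative. -/
def E7PosRoots : Set (Fin 7 → ℤ) :=
  {v | (∑ i, ∑ j, v i * E7Cartan i j * v j = 2) ∧ ∀ j, 0 ≤ v j}

/-- The highest root `α̃₀ = 2α₁ + 2α₂ + 3α₃ + 4α₄ + 3α₅ + 2α₆ + α₇` of `E₇`. -/
def E7Highest : Fin 7 → ℤ := ![2, 2, 3, 4, 3, 2, 1]

/-- The simple root `αᵢ` (for `1 ≤ i ≤ 7`) as a coefficient vector; node `0`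
(the affine node) is sent to `0`. -/
def E7SimpleRoot (i : Fin 8) : Fin 7 → ℤ :=
  fun j => if (i : ℕ) = (j : ℕ) + 1 then 1 else 0

/-- The extended Dynkin diagram of `E₇`: vertex set `{0, 1, …, 7}`, edges
`0–1, 1–3, 3–4, 4–5, 5–6, 6–7, 2–4`. -/
def E7ExtGraph : SimpleGraph (Fin 8) :=
  SimpleGraph.fromEdgeSet {s(0,1), s(1,3), s(3,4), s(4,5), s(5,6), s(6,7), s(2,4)}

/-- The map `φ` from connected subsets of the extended Dynkin diagram to roots:
`φ(J) = Σ_{i∈J} αᵢ` if `0 ∉ J`, and `φ(J) = α̃₀ − Σ_{i∈J, i≠0} αᵢ` if `0 ∈ J`. -/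
def E7phi (J : Finset (Fin 8)) : Fin 7 → ℤ :=
  if 0 ∈ J then E7Highest - ∑ i ∈ J.erase 0, E7SimpleRoot i
  else ∑ i ∈ J, E7SimpleRoot i


/-!
In the coordinates `α₀, …, α₇` of the extended diagram, with `α₀ = δ - α̃₀`, the form `vᵀ C v`
becomes the form of the affine Cartan matrix `2I - A` of the extended diagram, whose radical is
spanned by the null root `δ = α₀ + α̃₀`. Up to sign and a multiple of `δ`, `φ(J)` is the indicator
vector `𝟙_J`, so `φ(J)ᵀ C φ(J) = 𝟙_Jᵀ (2I - A) 𝟙_J = 2|J| - 2e(J)`, where `e(J)` counts the edges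
inside `J`. The extended diagram of `E₇` is a tree, so a connected `J` spans a subtree with
`|J| - 1` edges and the value is `2`.

Every coefficient of `α̃₀` is at least `1`, which gives nonnegativity. The `α₄`-coefficient of
`α̃₀` is `4`, so the `α₄`-coordinate of `φ(J)` tells whether `0 ∈ J`; after that every other
coordinate of `φ(J)` tells whether the corresponding node lies in `J`.
-/

open Matrix Finset

namespace Matrix

variable {n R : Type*} [Fintype n] [CommRing R]

theorem indicator_dotProduct_mulVec_indicator (M : Matrix n n R) (s : Finset n) :
    (s : Set n).indicator 1 ⬝ᵥ M *ᵥ (s : Set n).indicator 1 =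
      (1 : s → R) ⬝ᵥ M.submatrix ((↑) : s → n) ((↑) : s → n) *ᵥ 1 := by
  classical
  simp [dotProduct, mulVec, Set.indicator_apply, Finset.sum_attach s (fun i => ∑ j ∈ s, M i j),
    Finset.sum_attach s (M _)]

theorem add_smul_dotProduct_mulVec_add_smul {M : Matrix n n R} (hM : Mᵀ = M) {δ : n → R}
    (hδ : M *ᵥ δ = 0) (x : n → R) (c : R) :
    (x + c • δ) ⬝ᵥ M *ᵥ (x + c • δ) = x ⬝ᵥ M *ᵥ x := by
  have hδx : δ ⬝ᵥ M *ᵥ x = 0 := by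
    rw [dotProduct_mulVec, ← mulVec_transpose, hM, hδ, zero_dotProduct]
  simp [mulVec_add, mulVec_smul, hδ, add_dotProduct, smul_dotProduct, hδx]

theorem neg_dotProduct_mulVec_neg (M : Matrix n n R) (v : n → R) :
    -v ⬝ᵥ M *ᵥ -v = v ⬝ᵥ M *ᵥ v := by
  simp [mulVec_neg]

theorem cons_zero_dotProduct_mulVec_cons_zero {k : ℕ} (M : Matrix (Fin (k + 1)) (Fin (k + 1)) R)
    (v : Fin k → R) :
    Fin.cons 0 v ⬝ᵥ M *ᵥ Fin.cons 0 v = v ⬝ᵥ M.submatrix Fin.succ Fin.succ *ᵥ v := by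
  simp [dotProduct, mulVec, Fin.sum_univ_succ]

end Matrix

namespace SimpleGraph

variable {V R : Type*} [DecidableEq V] [CommRing R] (G : SimpleGraph V) [DecidableRel G.Adj]

variable (R) in
def cartanMatrix : Matrix V V R :=
  2 - G.adjMatrix R

theorem transpose_cartanMatrix : (G.cartanMatrix R)ᵀ = G.cartanMatrix R := by
  simp [cartanMatrix, transpose_sub]

theorem cartanMatrix_induce (s : Finset V) :
    (G.induce (s : Set V)).cartanMatrix R =
      (G.cartanMatrix R).submatrix ((↑) : s → V) ((↑) : s → V) := by
  ext i j
  simp only [cartanMatrix, Matrix.sub_apply, submatrix_apply, ← diagonal_ofNat, diagonal_apply,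
    Subtype.ext_iff]
  rfl

variable [Fintype V]

theorem one_dotProduct_cartanMatrix_mulVec_one :
    1 ⬝ᵥ G.cartanMatrix R *ᵥ 1 = 2 * Fintype.card V - 2 * #G.edgeFinset := by
  have hdiag : (1 : V → R) ⬝ᵥ (2 : Matrix V V R) *ᵥ 1 = 2 * Fintype.card V := by
    simp [← diagonal_ofNat, dotProduct, mul_comm]
  have hadj : (1 : V → R) ⬝ᵥ G.adjMatrix R *ᵥ 1 = 2 * #G.edgeFinset := by
    rw [dotProduct_comm, ← natCast_card_dart_eq_dotProduct, dart_card_eq_twice_card_edges]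
    push_cast
    ring
  rw [cartanMatrix, sub_mulVec, dotProduct_sub, hdiag, hadj]

variable {G}

theorem IsTree.one_dotProduct_cartanMatrix_mulVec_one (hG : G.IsTree) :
    1 ⬝ᵥ G.cartanMatrix R *ᵥ 1 = 2 := by
  rw [G.one_dotProduct_cartanMatrix_mulVec_one, ← hG.card_edgeFinset]
  push_cast
  ring

theorem IsAcyclic.indicator_dotProduct_cartanMatrix_mulVec_indicator (hG : G.IsAcyclic)
    {s : Finset V} (hs : (G.induce (s : Set V)).Connected) :
    (s : Set V).indicator 1 ⬝ᵥ G.cartanMatrix R *ᵥ (s : Set V).indicator 1 = 2 := by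
  rw [indicator_dotProduct_mulVec_indicator, ← cartanMatrix_induce]
  exact IsTree.one_dotProduct_cartanMatrix_mulVec_one ⟨hs, hG.induce _⟩

end SimpleGraph

instance : DecidableRel E7ExtGraph.Adj :=
  inferInstanceAs (DecidableRel (SimpleGraph.fromEdgeSet _).Adj)

theorem E7ExtGraph_isTree : E7ExtGraph.IsTree := by
  rw [SimpleGraph.isTree_iff_connected_and_card, Nat.card_eq_fintype_card,
    Nat.card_eq_fintype_card]
  decide

/-- The null root `δ = α₀ + α̃₀` in the coordinates `α₀, …, α₇`. -/
def E7NullRoot : Fin 8 → ℤ := Fin.cons 1 E7Highest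

theorem cartanMatrix_mulVec_E7NullRoot : E7ExtGraph.cartanMatrix ℤ *ᵥ E7NullRoot = 0 := by
  decide

theorem cartanMatrix_E7ExtGraph_submatrix_succ :
    (E7ExtGraph.cartanMatrix ℤ).submatrix Fin.succ Fin.succ = E7Cartan := by
  decide

theorem sum_E7SimpleRoot_apply (s : Finset (Fin 8)) (j : Fin 7) :
    (∑ i ∈ s, E7SimpleRoot i) j = if j.succ ∈ s then 1 else 0 := by
  simp [Finset.sum_apply, E7SimpleRoot, ← Fin.val_succ, Fin.val_inj]

theorem E7phi_apply (J : Finset (Fin 8)) (j : Fin 7) :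
    E7phi J j = if 0 ∈ J then E7Highest j - (if j.succ ∈ J then 1 else 0)
      else (if j.succ ∈ J then 1 else 0) := by
  by_cases h0 : 0 ∈ J <;>
    simp only [E7phi, h0, if_true, if_false, Pi.sub_apply, sum_E7SimpleRoot_apply, mem_erase,
      ne_eq, Fin.succ_ne_zero, not_false_eq_true, true_and]

theorem E7phi_nonneg (J : Finset (Fin 8)) (j : Fin 7) : 0 ≤ E7phi J j := by
  have hθ : 1 ≤ E7Highest j := (by decide : ∀ i, 1 ≤ E7Highest i) j
  rw [E7phi_apply]
  split_ifs <;> omega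

theorem E7phi_dotProduct_E7Cartan_mulVec (J : Finset (Fin 8)) :
    E7phi J ⬝ᵥ E7Cartan *ᵥ E7phi J =
      (J : Set (Fin 8)).indicator 1 ⬝ᵥ
        E7ExtGraph.cartanMatrix ℤ *ᵥ (J : Set (Fin 8)).indicator 1 := by
  set x : Fin 8 → ℤ := (J : Set (Fin 8)).indicator 1
  have hform (v : Fin 7 → ℤ) :
      v ⬝ᵥ E7Cartan *ᵥ v = Fin.cons 0 v ⬝ᵥ E7ExtGraph.cartanMatrix ℤ *ᵥ Fin.cons 0 v := by
    rw [cons_zero_dotProduct_mulVec_cons_zero, cartanMatrix_E7ExtGraph_submatrix_succ]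
  by_cases h0 : 0 ∈ J
  · have hcons : Fin.cons 0 (E7phi J) = -(x + (-1 : ℤ) • E7NullRoot) := by
      ext i
      cases i using Fin.cases <;>
        simp [x, E7phi_apply, h0, E7NullRoot, Set.indicator_apply, sub_eq_add_neg]
    rw [hform, hcons, neg_dotProduct_mulVec_neg,
      add_smul_dotProduct_mulVec_add_smul E7ExtGraph.transpose_cartanMatrix
        cartanMatrix_mulVec_E7NullRoot]
  · have hcons : Fin.cons 0 (E7phi J) = x := by
      ext i
      cases i using Fin.cases <;> simp [x, E7phi_apply, h0, Set.indicator_apply]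
    rw [hform, hcons]

theorem E7phi_mem_E7PosRoots {J : Finset (Fin 8)}
    (hJ : (E7ExtGraph.induce (J : Set (Fin 8))).Connected) : E7phi J ∈ E7PosRoots := by
  refine ⟨?_, E7phi_nonneg J⟩
  rw [← toBilin'_apply, toBilin'_apply', E7phi_dotProduct_E7Cartan_mulVec]
  exact E7ExtGraph_isTree.isAcyclic.indicator_dotProduct_cartanMatrix_mulVec_indicator hJ

theorem zero_mem_iff_two_le_E7phi (J : Finset (Fin 8)) : 0 ∈ J ↔ 2 ≤ E7phi J 3 := by
  have hθ : E7Highest 3 = 4 := rfl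
  rw [E7phi_apply, hθ]
  split_ifs <;> simp_all

theorem succ_mem_iff_E7phi (J : Finset (Fin 8)) (j : Fin 7) :
    j.succ ∈ J ↔ E7phi J j = if 0 ∈ J then E7Highest j - 1 else 1 := by
  rw [E7phi_apply]
  split_ifs <;> simp_all
  omega

theorem E7phi_injective : Function.Injective E7phi := by
  intro J J' h
  ext a
  cases a using Fin.cases with
  | zero => rw [zero_mem_iff_two_le_E7phi, zero_mem_iff_two_le_E7phi, h]
  | succ j => simp only [succ_mem_iff_E7phi, zero_mem_iff_two_le_E7phi, h]

/-- For every nonempty subset `J` of `{0,…,7}` inducing a connected subgraph of the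
extended Dynkin diagram of `E₇`, `φ(J)` is a positive root, and `φ` is injective on
such subsets. -/
theorem e7_phi_into_positive_roots_injective :
    (∀ J : Finset (Fin 8), J.Nonempty →
      (E7ExtGraph.induce (J : Set (Fin 8))).Connected → E7phi J ∈ E7PosRoots) ∧
    (∀ J J' : Finset (Fin 8), J.Nonempty →
      (E7ExtGraph.induce (J : Set (Fin 8))).Connected → J'.Nonempty →
      (E7ExtGraph.induce (J' : Set (Fin 8))).Connected →
      E7phi J = E7phi J' → J = J') :=
  ⟨fun _ _ hJ => E7phi_mem_E7PosRoots hJ, fun _ _ _ _ _ _ h => E7phi_injective h⟩
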